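/- arXiv:2203.10639 — 2 statements merged into one kernel-verified Lean document; each statement's English description precedes it below -/
import Mathlib

section
/- (Willems' fundamental lemma) Let (A, B, C, D) be a discrete-time LTI system with state dimension n and controllable pair (A, B). Let (u^d, y^d) be a length-T input/output trajectory of the system, and suppose the input sequence u^d is persistently exciting of order L + n. Then a pair (u^s, y^s) with u^s ∈ (R^m)^L, y^s ∈ (R^p)^L is a length-L input/output trajectory of the system if and only if there exists g ∈ R^{T−L+1} such that H_L(u^d) g = u^s and H_L(y^d) g = y^s (identifying (R^q)^L with R^{qL} by stacking). -/
open Matrix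

noncomputable section

/-- `(u, y)` is a length-`L` input/output trajectory of the discrete-time LTI system
`(A, B, C, D)`: there is a state sequence `x` with `x(k+1) = A x(k) + B u(k)` and
`y(k) = C x(k) + D u(k)` for `k = 0, …, L-1`. -/
def IsTrajectory {n m p : ℕ} (A : Matrix (Fin n) (Fin n) ℝ) (B : Matrix (Fin n) (Fin m) ℝ)
    (C : Matrix (Fin p) (Fin n) ℝ) (D : Matrix (Fin p) (Fin m) ℝ) {L : ℕ}
    (u : Fin L → Fin m → ℝ) (y : Fin L → Fin p → ℝ) : Prop :=
  ∃ x : Fin (L + 1) → Fin n → ℝ, ∀ k : Fin L,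
    x k.succ = A.mulVec (x k.castSucc) + B.mulVec (u k) ∧
    y k = C.mulVec (x k.castSucc) + D.mulVec (u k)

/-- The block Hankel matrix `H_l(ω) ∈ ℝ^{ql × (T-l+1)}` of depth `l` of a length-`T`
sequence `ω` with values in `ℝ^q`; rows are indexed by `Fin l × Fin q`, and the
`(i, j)` block entry is `ω (i + j)` (0-indexed). -/
def hankel {q T : ℕ} (l : ℕ) (hl : l ≤ T) (ω : Fin T → Fin q → ℝ) :
    Matrix (Fin l × Fin q) (Fin (T - l + 1)) ℝ :=
  Matrix.of fun iq j =>
    ω ⟨(iq.1 : ℕ) + (j : ℕ), by have := iq.1.isLt; have := j.isLt; omega⟩ iq.2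

/-- The controllability matrix `[B, AB, …, A^{n-1}B]`. -/
def ctrbMat {n : ℕ} {q : Type*} [Fintype q] (A : Matrix (Fin n) (Fin n) ℝ)
    (B : Matrix (Fin n) q ℝ) : Matrix (Fin n) (Fin n × q) ℝ :=
  Matrix.of fun r kj => (A ^ (kj.1 : ℕ) * B) r kj.2

/-- The order-`l` observability matrix `col(C, CA, …, CA^{l-1})`. -/
def obsvMat {n p : ℕ} (l : ℕ) (A : Matrix (Fin n) (Fin n) ℝ)
    (C : Matrix (Fin p) (Fin n) ℝ) : Matrix (Fin l × Fin p) (Fin n) ℝ :=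
  Matrix.of fun kr c => (C * A ^ (kr.1 : ℕ)) kr.2 c

/-- Concatenation of a length-`Ti` sequence followed by a length-`N` sequence. -/
def catSeq {α : Type*} {Ti N : ℕ} (a : Fin Ti → α) (b : Fin N → α) : Fin (Ti + N) → α :=
  fun k => if h : (k : ℕ) < Ti then a ⟨k, h⟩ else b ⟨(k : ℕ) - Ti, by have := k.isLt; omega⟩

end

/-!
Stack the depth-`L` input Hankel matrix on the row of window start states `x(0), …, x(T-L)`.
This matrix has full row rank. If `(ξ, η)` is in its left kernel, pushing the relation one step
through `x(k+1) = A x(k) + B u(k)` turns it into the relation `((ηB, ξ), ηA)` for windows one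
longer; combining the shifts by `0, …, n` steps with the coefficients of the characteristic
polynomial of `A` removes the state part (Cayley–Hamilton). Persistency of excitation then makes
the input part vanish. That input part is the sequence `(ηA^{n-1}B, …, ηB, ξ)` run through the
recurrence given by the monic characteristic polynomial, which expresses each term through the
next `n`; the sequence is eventually zero, hence zero. Hence `ξ = 0` and
`ηA^kB = 0` for `k < n`, so `η = 0` by controllability.

So every input together with an initial state is reached by some combination `g` of data
windows. That combination is again a trajectory (linearity and shift invariance) with the same
input and initial state as the given one, hence with the same output.
-/

open Matrix Finset

namespace Matrix

variable {ι κ K : Type*} [Fintype ι] [Fintype κ] [Field K] {M : Matrix ι κ K}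

theorem vecMul_injective_of_rank_eq_card (h : M.rank = Fintype.card ι) :
    Function.Injective M.vecMul := by
  rw [vecMul_injective_iff, linearIndependent_iff_card_eq_finrank_span, ← h,
    rank_eq_finrank_span_row]
  rfl

theorem mulVec_surjective_of_vecMul_injective (h : Function.Injective M.vecMul) :
    Function.Surjective M.mulVec := by
  have hrange : LinearMap.range M.mulVecLin = ⊤ := Submodule.eq_top_of_finrank_eq <| by
    rw [Module.finrank_fintype_fun_eq_card]
    exact (vecMul_injective_iff.mp h).rank_matrix
  exact fun v => LinearMap.range_eq_top.mp hrange v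

end Matrix

theorem eq_zero_of_recurrence_of_eventually_zero {R M : Type*} [Semiring R] [AddCommMonoid M]
    [Module R M] {z : ℕ → M} {c : ℕ → R} {n N : ℕ} (hc : c n = 1)
    (hrec : ∀ t, ∑ i ∈ range (n + 1), c i • z (t + (n - i)) = 0)
    (hN : ∀ t, N ≤ t → z t = 0) : z = 0 := by
  suffices ∀ t, z t = 0 from funext this
  intro t
  induction h : N - t using Nat.strong_induction_on generalizing t with
  | _ d ih =>
    by_cases ht : N ≤ t
    · exact hN t ht
    have hlater : ∀ i ∈ range n, c i • z (t + (n - i)) = 0 := by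
      intro i hi
      rw [ih (N - (t + (n - i))) (by simp only [mem_range] at hi; omega) _ rfl, smul_zero]
    simpa [sum_range_succ, sum_eq_zero hlater, hc] using hrec t

def zeroExtend {α : Type*} [Zero α] {T : ℕ} (ω : Fin T → α) : ℕ → α :=
  fun k => if h : k < T then ω ⟨k, h⟩ else 0

theorem zeroExtend_of_lt {α : Type*} [Zero α] {T k : ℕ} (ω : Fin T → α) (h : k < T) :
    zeroExtend ω k = ω ⟨k, h⟩ :=
  dif_pos h

@[simp]
theorem zeroExtend_val {α : Type*} [Zero α] {T : ℕ} (ω : Fin T → α) (k : Fin T) :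
    zeroExtend ω k = ω k :=
  zeroExtend_of_lt ω k.isLt

def windowCombination {α : Type*} [AddCommMonoid α] [Module ℝ α] {K : ℕ} (g : Fin K → ℝ)
    (ω : ℕ → α) : ℕ → α :=
  fun k => ∑ j, g j • ω (k + j)

theorem hankel_mulVec_apply {q T L : ℕ} (hL : L ≤ T) (ω : Fin T → Fin q → ℝ)
    (g : Fin (T - L + 1) → ℝ) (k : Fin L) (r : Fin q) :
    (hankel L hL ω *ᵥ g) (k, r) = windowCombination g (zeroExtend ω) k r := by
  simp only [mulVec, dotProduct, hankel, of_apply, windowCombination, Finset.sum_apply,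
    Pi.smul_apply, smul_eq_mul]
  refine sum_congr rfl fun j _ => ?_
  rw [zeroExtend_of_lt ω (by omega), mul_comm]

theorem hankel_mulVec_eq_iff {q T L : ℕ} (hL : L ≤ T) (ω : Fin T → Fin q → ℝ)
    (g : Fin (T - L + 1) → ℝ) (s : Fin L → Fin q → ℝ) :
    hankel L hL ω *ᵥ g = (fun kr => s kr.1 kr.2) ↔
      ∀ k < L, windowCombination g (zeroExtend ω) k = zeroExtend s k := by
  constructor
  · intro h k hk
    funext r
    simpa [hankel_mulVec_apply, zeroExtend_of_lt s hk] using congrFun h (⟨k, hk⟩, r)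
  · intro h
    funext ⟨k, r⟩
    rw [hankel_mulVec_apply, h k k.isLt, zeroExtend_val]

theorem vecMul_hankel_apply {q T N : ℕ} (hN : N ≤ T) (ω : Fin T → Fin q → ℝ)
    (v : Fin N × Fin q → ℝ) (j : Fin (T - N + 1)) :
    (v ᵥ* hankel N hN ω) j = ∑ t : Fin N, (fun r => v (t, r)) ⬝ᵥ zeroExtend ω (t + j) := by
  simp only [vecMul, dotProduct, hankel, of_apply, Fintype.sum_prod_type]
  refine sum_congr rfl fun t _ => sum_congr rfl fun r _ => ?_
  rw [zeroExtend_of_lt ω (by omega)]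

def IsStateTrajectory {n m p : ℕ} (A : Matrix (Fin n) (Fin n) ℝ) (B : Matrix (Fin n) (Fin m) ℝ)
    (C : Matrix (Fin p) (Fin n) ℝ) (D : Matrix (Fin p) (Fin m) ℝ) (N : ℕ)
    (u : ℕ → Fin m → ℝ) (x : ℕ → Fin n → ℝ) (y : ℕ → Fin p → ℝ) : Prop :=
  ∀ k < N, x (k + 1) = A *ᵥ x k + B *ᵥ u k ∧ y k = C *ᵥ x k + D *ᵥ u k

variable {n m p : ℕ} {A : Matrix (Fin n) (Fin n) ℝ} {B : Matrix (Fin n) (Fin m) ℝ}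
  {C : Matrix (Fin p) (Fin n) ℝ} {D : Matrix (Fin p) (Fin m) ℝ}

theorem isTrajectory_iff {L : ℕ} (u : Fin L → Fin m → ℝ) (y : Fin L → Fin p → ℝ) :
    IsTrajectory A B C D u y ↔
      ∃ x, IsStateTrajectory A B C D L (zeroExtend u) x (zeroExtend y) := by
  constructor
  · rintro ⟨x, hx⟩
    refine ⟨zeroExtend x, fun k hk => ?_⟩
    rw [zeroExtend_of_lt u hk, zeroExtend_of_lt y hk, zeroExtend_of_lt x (by omega),
      zeroExtend_of_lt x (by omega)]
    exact hx ⟨k, hk⟩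
  · rintro ⟨x, hx⟩
    exact ⟨fun k => x k, fun k => by simpa using hx k k.isLt⟩

namespace IsStateTrajectory

variable {N : ℕ} {u u' : ℕ → Fin m → ℝ} {x x' : ℕ → Fin n → ℝ} {y y' : ℕ → Fin p → ℝ}

theorem congr (h : IsStateTrajectory A B C D N u x y) (hu : ∀ k < N, u k = u' k)
    (hy : ∀ k < N, y k = y' k) : IsStateTrajectory A B C D N u' x y' := fun k hk => by
  rw [← hu k hk, ← hy k hk]
  exact h k hk

theorem output_eq (h : IsStateTrajectory A B C D N u x y)
    (h' : IsStateTrajectory A B C D N u' x' y') (hu : ∀ k < N, u k = u' k) (hx : x 0 = x' 0) :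
    ∀ k < N, y k = y' k := by
  have hstate : ∀ k ≤ N, x k = x' k := by
    intro k
    induction k with
    | zero => exact fun _ => hx
    | succ k ih =>
      intro hk
      rw [(h k hk).1, (h' k hk).1, ih (by omega), hu k hk]
  intro k hk
  rw [(h k hk).2, (h' k hk).2, hstate k hk.le, hu k hk]

theorem windowCombination {T L K : ℕ} (h : IsStateTrajectory A B C D T u x y)
    (hK : L + K ≤ T + 1) (g : Fin K → ℝ) :
    IsStateTrajectory A B C D L (windowCombination g u) (windowCombination g x)
      (windowCombination g y) := by
  intro k hk
  simp only [_root_.windowCombination, mulVec_sum, mulVec_smul, ← sum_add_distrib, ← smul_add]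
  constructor <;> refine sum_congr rfl fun j _ => ?_
  · rw [add_right_comm, (h (k + j) (by omega)).1]
  · rw [(h (k + j) (by omega)).2]

end IsStateTrajectory

theorem sum_charpoly_coeff_smul_vecMul_pow (A : Matrix (Fin n) (Fin n) ℝ) (η : Fin n → ℝ) :
    ∑ i ∈ range (n + 1), A.charpoly.coeff i • η ᵥ* A ^ i = 0 := by
  have h := A.aeval_self_charpoly
  rw [Polynomial.aeval_eq_sum_range, A.charpoly_natDegree_eq_dim, Fintype.card_fin] at h
  simp_rw [← vecMul_smul, ← vecMul_sum, h, vecMul_zero]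

theorem eq_zero_of_vecMul_pow_mul_eq_zero (hctrb : (ctrbMat A B).rank = n) {η : Fin n → ℝ}
    (h : ∀ d < n, η ᵥ* (A ^ d * B) = 0) : η = 0 := by
  refine vecMul_injective_of_rank_eq_card (M := ctrbMat A B) (by simpa using hctrb) ?_
  funext ⟨d, r⟩
  simpa [vecMul, dotProduct, ctrbMat] using congrFun (h d d.isLt) r

/-- The left kernel of the stacked matrix `[H_N(u); x(0) ⋯ x(T-N)]`, a row vector being split as
`(w 0, …, w (N-1), η)`. -/
def AnnihilatesWindows (T N : ℕ) (u : ℕ → Fin m → ℝ) (x : ℕ → Fin n → ℝ) (w : ℕ → Fin m → ℝ)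
    (η : Fin n → ℝ) : Prop :=
  ∀ j, j + N ≤ T → ∑ t ∈ range N, w t ⬝ᵥ u (t + j) + η ⬝ᵥ x j = 0

namespace AnnihilatesWindows

variable {T N : ℕ} {u : ℕ → Fin m → ℝ} {x : ℕ → Fin n → ℝ} {w : ℕ → Fin m → ℝ} {η : Fin n → ℝ}

theorem shift (hx : ∀ j < T, x (j + 1) = A *ᵥ x j + B *ᵥ u j)
    (h : AnnihilatesWindows T N u x w η) {w' : ℕ → Fin m → ℝ} (h0 : w' 0 = η ᵥ* B)
    (hsucc : ∀ t, w' (t + 1) = w t) : AnnihilatesWindows T (N + 1) u x w' (η ᵥ* A) := by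
  intro j hj
  have hnext := h (j + 1) (by omega)
  rw [hx j (by omega), dotProduct_add, dotProduct_mulVec, dotProduct_mulVec] at hnext
  have hidx : ∀ t, t + 1 + j = t + (j + 1) := fun t => by omega
  rw [sum_range_succ', h0, zero_add]
  simp only [hsucc, hidx]
  linarith

theorem sum {ι : Type*} (s : Finset ι) (c : ι → ℝ) {w : ι → ℕ → Fin m → ℝ} {η : ι → Fin n → ℝ}
    (h : ∀ i ∈ s, AnnihilatesWindows T N u x (w i) (η i)) :
    AnnihilatesWindows T N u x (fun t => ∑ i ∈ s, c i • w i t) (∑ i ∈ s, c i • η i) := by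
  intro j hj
  simp only [sum_dotProduct, smul_dotProduct, smul_eq_mul]
  rw [Finset.sum_comm, ← sum_add_distrib]
  refine sum_eq_zero fun i hi => ?_
  rw [← mul_sum, ← mul_add, h i hi j hj, mul_zero]

theorem mono {N' : ℕ} (h : AnnihilatesWindows T N u x w η) (hN : N ≤ N')
    (hw : ∀ t, N ≤ t → w t = 0) : AnnihilatesWindows T N' u x w η := by
  intro j hj
  rw [← h j (by omega), sum_subset (range_subset_range.mpr hN)]
  intro t _ ht
  rw [hw t (by simpa using ht), zero_dotProduct]

theorem eq_zero_of_rank_hankel (hN : N ≤ T) {ω : Fin T → Fin m → ℝ}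
    (hPE : (hankel N hN ω).rank = m * N) (h : AnnihilatesWindows T N (zeroExtend ω) x w 0) :
    ∀ t < N, w t = 0 := by
  have hinj : Function.Injective (hankel N hN ω).vecMul :=
    vecMul_injective_of_rank_eq_card (by simpa [mul_comm] using hPE)
  have hv : (fun tr : Fin N × Fin m => w tr.1 tr.2) = 0 := hinj <| by
    show _ ᵥ* _ = 0 ᵥ* _
    rw [zero_vecMul]
    funext j
    have hj := h j (by omega)
    rw [zero_dotProduct, add_zero, ← Fin.sum_univ_eq_sum_range] at hj
    rw [vecMul_hankel_apply, Pi.zero_apply, ← hj]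
  intro t ht
  funext r
  exact congrFun hv (⟨t, ht⟩, r)

theorem eq_zero_of_controllable {L : ℕ} (hLn : L + n ≤ T) {ω : Fin T → Fin m → ℝ}
    (hx : ∀ j < T, x (j + 1) = A *ᵥ x j + B *ᵥ zeroExtend ω j)
    (hPE : (hankel (L + n) hLn ω).rank = m * (L + n)) (hctrb : (ctrbMat A B).rank = n)
    {ξ : ℕ → Fin m → ℝ} (hξ : ∀ t, L ≤ t → ξ t = 0)
    (h : AnnihilatesWindows T L (zeroExtend ω) x ξ η) : (∀ t, ξ t = 0) ∧ η = 0 := by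
  -- `z = (ηA^{n-1}B, …, ηB, ξ)`; the input part of the `i`-fold shift of `(ξ, η)` is
  -- `z (· + (n - i))`.
  set z : ℕ → Fin m → ℝ := fun t => if t < n then η ᵥ* (A ^ (n - 1 - t) * B) else ξ (t - n)
  have hz_low : ∀ d < n, z (n - 1 - d) = η ᵥ* (A ^ d * B) := fun d hd => by
    rw [show z (n - 1 - d) = η ᵥ* (A ^ (n - 1 - (n - 1 - d)) * B) from if_pos (by omega),
      show n - 1 - (n - 1 - d) = d by omega]
  have hz_high : ∀ t, n ≤ t → z t = ξ (t - n) := fun t ht => if_neg (by omega)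
  have hz_supp : ∀ t, L + n ≤ t → z t = 0 := fun t ht => by
    rw [hz_high t (by omega), hξ _ (by omega)]
  have hshift : ∀ i ≤ n,
      AnnihilatesWindows T (L + i) (zeroExtend ω) x (fun t => z (t + (n - i))) (η ᵥ* A ^ i) := by
    intro i
    induction i with
    | zero => exact fun _ => by simpa [hz_high] using h
    | succ i ih =>
      intro hi
      rw [pow_succ, ← vecMul_vecMul]
      refine (ih (by omega)).shift hx ?_ fun t => by
        rw [show t + 1 + (n - (i + 1)) = t + (n - i) by omega]
      rw [zero_add, vecMul_vecMul, show n - (i + 1) = n - 1 - i by omega, hz_low i hi]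
  have hlong : ∀ i ∈ range (n + 1), AnnihilatesWindows T (L + n) (zeroExtend ω) x
      (fun t => z (t + (n - i))) (η ᵥ* A ^ i) := by
    intro i hi
    have hin : i ≤ n := Nat.lt_succ_iff.mp (mem_range.mp hi)
    exact (hshift i hin).mono (by omega) fun t ht => hz_supp _ (by omega)
  have hcomb := AnnihilatesWindows.sum (range (n + 1)) (fun i => A.charpoly.coeff i) hlong
  rw [sum_charpoly_coeff_smul_vecMul_pow] at hcomb
  have hrec := hcomb.eq_zero_of_rank_hankel hLn hPE
  have hz : z = 0 := by
    refine eq_zero_of_recurrence_of_eventually_zero (c := fun i => A.charpoly.coeff i) (n := n)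
      ?_ (fun t => ?_) hz_supp
    · simpa [A.charpoly_natDegree_eq_dim] using A.charpoly_monic.coeff_natDegree
    · by_cases ht : t < L + n
      · exact hrec t ht
      · exact sum_eq_zero fun i _ => by rw [hz_supp _ (by omega), smul_zero]
  refine ⟨fun t => by simpa [hz_high] using congrFun hz (t + n), ?_⟩
  exact eq_zero_of_vecMul_pow_mul_eq_zero hctrb fun d hd => by rw [← hz_low d hd, hz]; rfl

end AnnihilatesWindows

theorem exists_hankel_mulVec_eq_of_controllable {T L : ℕ} (hLT : L ≤ T) (hLn : L + n ≤ T)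
    {ω : Fin T → Fin m → ℝ} {x : ℕ → Fin n → ℝ}
    (hx : ∀ j < T, x (j + 1) = A *ᵥ x j + B *ᵥ zeroExtend ω j)
    (hPE : (hankel (L + n) hLn ω).rank = m * (L + n)) (hctrb : (ctrbMat A B).rank = n)
    (v : Fin L × Fin m → ℝ) (x₀ : Fin n → ℝ) :
    ∃ g, hankel L hLT ω *ᵥ g = v ∧ windowCombination g x 0 = x₀ := by
  set X : Matrix (Fin n) (Fin (T - L + 1)) ℝ := of fun r j => x j r
  have hX : ∀ g, X *ᵥ g = windowCombination g x 0 := fun g => by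
    funext r
    simp [X, windowCombination, mulVec, dotProduct, Finset.sum_apply, mul_comm]
  have hker : ∀ v, v ᵥ* (hankel L hLT ω).fromRows X = 0 → v = 0 := by
    intro v hv
    have hann : AnnihilatesWindows T L (zeroExtend ω) x
        (zeroExtend fun t r => v (.inl (t, r))) (v ∘ .inr) := by
      intro j hj
      have hcol := congrFun hv ⟨j, by omega⟩
      rw [vecMul_fromRows, Pi.add_apply, vecMul_hankel_apply] at hcol
      rw [← Fin.sum_univ_eq_sum_range
        (fun t => zeroExtend (fun t r => v (.inl (t, r))) t ⬝ᵥ zeroExtend ω (t + j))]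
      simpa [X, vecMul, dotProduct] using hcol
    obtain ⟨hξ, hη⟩ := hann.eq_zero_of_controllable hLn hx hPE hctrb fun t ht => dif_neg (by omega)
    ext (⟨t, r⟩ | r)
    · simpa using congrFun (hξ t) r
    · exact congrFun hη r
  have hinj : Function.Injective ((hankel L hLT ω).fromRows X).vecMul := fun a b hab =>
    sub_eq_zero.mp (hker _ (by rw [sub_vecMul]; exact sub_eq_zero.mpr hab))
  obtain ⟨g, hg⟩ := mulVec_surjective_of_vecMul_injective hinj (Sum.elim v x₀)
  rw [fromRows_mulVec, Sum.elim_eq_iff] at hg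
  exact ⟨g, hg.1, (hX g).symm.trans hg.2⟩

/-- **Willems' fundamental lemma.** Let `(A,B,C,D)` be a discrete-time
LTI system with controllable pair `(A,B)`, let `(u^d, y^d)` be a length-`T` trajectory
whose input is persistently exciting of order `L + n` (its depth-`(L+n)` Hankel matrix
has full row rank `m(L+n)`).  Then `(u^s, y^s)` is a length-`L` trajectory of the
system iff there exists `g ∈ ℝ^{T-L+1}` with `H_L(u^d) g = u^s` and `H_L(y^d) g = y^s`. -/
theorem willems_fundamental_lemma
    (n m p T L : ℕ) (hLT : L ≤ T) (hLnT : L + n ≤ T)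
    (A : Matrix (Fin n) (Fin n) ℝ) (B : Matrix (Fin n) (Fin m) ℝ)
    (C : Matrix (Fin p) (Fin n) ℝ) (D : Matrix (Fin p) (Fin m) ℝ)
    (hctrb : (ctrbMat A B).rank = n)
    (ud : Fin T → Fin m → ℝ) (yd : Fin T → Fin p → ℝ)
    (htraj : IsTrajectory A B C D ud yd)
    (hPE : (hankel (L + n) hLnT ud).rank = m * (L + n))
    (us : Fin L → Fin m → ℝ) (ys : Fin L → Fin p → ℝ) :
    IsTrajectory A B C D us ys ↔
      ∃ g : Fin (T - L + 1) → ℝ,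
        (hankel L hLT ud).mulVec g = (fun ki => us ki.1 ki.2) ∧
        (hankel L hLT yd).mulVec g = (fun ki => ys ki.1 ki.2) := by
  obtain ⟨xd, hd⟩ := (isTrajectory_iff ud yd).1 htraj
  have hwindows := hd.windowCombination (L := L) (K := T - L + 1) (by omega)
  rw [isTrajectory_iff]
  constructor
  · rintro ⟨xs, hs⟩
    obtain ⟨g, hgu, hgx⟩ := exists_hankel_mulVec_eq_of_controllable hLT hLnT
      (fun j hj => (hd j hj).1) hPE hctrb (fun kr => us kr.1 kr.2) (xs 0)
    refine ⟨g, hgu, (hankel_mulVec_eq_iff hLT yd g ys).2 ?_⟩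
    exact (hwindows g).output_eq hs ((hankel_mulVec_eq_iff hLT ud g us).1 hgu) hgx
  · rintro ⟨g, hgu, hgy⟩
    exact ⟨_, (hwindows g).congr ((hankel_mulVec_eq_iff hLT ud g us).1 hgu)
      ((hankel_mulVec_eq_iff hLT yd g ys).1 hgy)⟩
end

section
/- (Uniqueness of the predicted output) Let (A, B, C, D) be a discrete-time LTI system with state dimension n, and let ν be the lag of the system, i.e., the smallest integer l such that the observability matrix col(C, CA, ..., CA^{l−1}) has full column rank n. Suppose T_ini ≥ ν. If col(u_ini, u, y_ini, y) and col(u_ini, u, y_ini, y') are both length-(T_ini + N) input/output trajectories of the system (sharing the same past inputs u_ini, past outputs y_ini, and future inputs u), then y = y'. -/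
open Matrix

/-- **uniqueness of the predicted output.** Let `ν` be the lag of the
system, i.e. the smallest `l` such that the order-`l` observability matrix
`col(C, CA, …, CA^{l-1})` has full column rank `n`.  If `T_ini ≥ ν` and
`col(u_ini, u, y_ini, y)`, `col(u_ini, u, y_ini, y')` are both trajectories of the
system sharing the same `u_ini`, `y_ini`, `u`, then `y = y'`. -/
theorem predicted_output_unique
    (n m p Tini N : ℕ)
    (A : Matrix (Fin n) (Fin n) ℝ) (B : Matrix (Fin n) (Fin m) ℝ)
    (C : Matrix (Fin p) (Fin n) ℝ) (D : Matrix (Fin p) (Fin m) ℝ)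
    (ν : ℕ)
    (hν : (obsvMat ν A C).rank = n)
    (hνmin : ∀ l : ℕ, (obsvMat l A C).rank = n → ν ≤ l)
    (hTini : ν ≤ Tini)
    (uini : Fin Tini → Fin m → ℝ) (u : Fin N → Fin m → ℝ)
    (yini : Fin Tini → Fin p → ℝ) (y y' : Fin N → Fin p → ℝ)
    (h1 : IsTrajectory A B C D (catSeq uini u) (catSeq yini y))
    (h2 : IsTrajectory A B C D (catSeq uini u) (catSeq yini y')) :
    y = y' := by
  obtain ⟨x, hx⟩ := h1
  obtain ⟨x', hx'⟩ := h2
  -- one-step recursion for the difference of states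
  have hstep : ∀ k : Fin (Tini + N),
      x k.succ - x' k.succ = A.mulVec (x k.castSucc - x' k.castSucc) := by
    intro k
    rw [(hx k).1, (hx' k).1, Matrix.mulVec_sub]
    abel
  -- the difference of states is A^j applied to the initial difference
  have hpow : ∀ j : ℕ, j ≤ Tini + N →
      ∀ (hj : j < Tini + N + 1),
      x ⟨j, hj⟩ - x' ⟨j, hj⟩ = (A ^ j).mulVec (x 0 - x' 0) := by
    intro j
    induction j with
    | zero =>
      intro _ hj
      have : (⟨0, hj⟩ : Fin (Tini + N + 1)) = 0 := rfl
      simp [this]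
    | succ j ih =>
      intro hle hj
      have hjlt : j < Tini + N := by omega
      have e1 : (⟨j + 1, hj⟩ : Fin (Tini + N + 1)) = (⟨j, hjlt⟩ : Fin (Tini + N)).succ := rfl
      have e2 : (⟨j, by omega⟩ : Fin (Tini + N + 1)) = (⟨j, hjlt⟩ : Fin (Tini + N)).castSucc := rfl
      rw [e1, hstep ⟨j, hjlt⟩, ← e2, ih (by omega) (by omega), pow_succ',
        ← Matrix.mulVec_mulVec]
  -- the observed outputs agree on the first Tini steps, so C·A^j kills the difference
  have hCzero : ∀ j : ℕ, j < ν →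
      C.mulVec ((A ^ j).mulVec (x 0 - x' 0)) = 0 := by
    intro j hjν
    have hjlt : j < Tini + N := by omega
    have hy1 := (hx ⟨j, hjlt⟩).2
    have hy2 := (hx' ⟨j, hjlt⟩).2
    have hcat : catSeq yini y ⟨j, hjlt⟩ = catSeq yini y' ⟨j, hjlt⟩ := by
      simp only [catSeq]
      rw [dif_pos (show j < Tini by omega), dif_pos (show j < Tini by omega)]
    rw [hy1, hy2] at hcat
    have : C.mulVec (x (⟨j, hjlt⟩ : Fin (Tini + N)).castSucc) =
        C.mulVec (x' (⟨j, hjlt⟩ : Fin (Tini + N)).castSucc) := by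
      have := add_right_cancel hcat
      exact this
    have e2 : (⟨j, by omega⟩ : Fin (Tini + N + 1)) = (⟨j, hjlt⟩ : Fin (Tini + N)).castSucc := rfl
    rw [← hpow j (by omega) (by omega), e2, Matrix.mulVec_sub, this, sub_self]
  -- the observability matrix kills the initial difference
  have hobsv : (obsvMat ν A C).mulVec (x 0 - x' 0) = 0 := by
    funext kr
    have : (obsvMat ν A C).mulVec (x 0 - x' 0) kr =
        ((C * A ^ (kr.1 : ℕ)).mulVec (x 0 - x' 0)) kr.2 := rfl
    rw [this, ← Matrix.mulVec_mulVec, hCzero kr.1 kr.1.isLt]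
    rfl
  -- full column rank ⇒ trivial kernel ⇒ initial states agree
  have hker : LinearMap.ker (obsvMat ν A C).mulVecLin = ⊥ := by
    have hrn := LinearMap.finrank_range_add_finrank_ker (obsvMat ν A C).mulVecLin
    have hd : Module.finrank ℝ (Fin n → ℝ) = n := by simp
    rw [hd] at hrn
    have hr : Module.finrank ℝ (LinearMap.range (obsvMat ν A C).mulVecLin) = n := hν
    rw [hr] at hrn
    have h0 : Module.finrank ℝ (LinearMap.ker (obsvMat ν A C).mulVecLin) = 0 := by omega
    exact Submodule.finrank_eq_zero.mp h0
  have he0 : x 0 - x' 0 = 0 := by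
    have hmem : (x 0 - x' 0) ∈ LinearMap.ker (obsvMat ν A C).mulVecLin := by
      rw [LinearMap.mem_ker]
      exact hobsv
    rw [hker] at hmem
    exact hmem
  -- hence all states agree
  have hxeq : ∀ j : ℕ, (hle : j ≤ Tini + N) → ∀ (hj : j < Tini + N + 1),
      x ⟨j, hj⟩ = x' ⟨j, hj⟩ := by
    intro j hle hj
    have := hpow j hle hj
    rw [he0, Matrix.mulVec_zero] at this
    exact sub_eq_zero.mp this
  -- and the future outputs agree
  funext k
  have hk : Tini + (k : ℕ) < Tini + N := by omega
  have hy1 := (hx ⟨Tini + k, hk⟩).2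
  have hy2 := (hx' ⟨Tini + k, hk⟩).2
  have hxx : x (⟨Tini + k, hk⟩ : Fin (Tini + N)).castSucc =
      x' (⟨Tini + k, hk⟩ : Fin (Tini + N)).castSucc :=
    hxeq (Tini + k) (by omega) (by omega)
  rw [hxx] at hy1
  have heq : catSeq yini y ⟨Tini + k, hk⟩ = catSeq yini y' ⟨Tini + k, hk⟩ := hy1.trans hy2.symm
  have hfin : (⟨Tini + (k : ℕ) - Tini, by omega⟩ : Fin N) = k := by
    apply Fin.ext; simp
  simpa only [catSeq, dif_neg (show ¬ Tini + (k : ℕ) < Tini by omega), hfin] using heq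
end
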